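/- Let $n \geq 1$ and let $\omega_1, \ldots, \omega_n$ be a basis of $\mathbb{F}_{2^n}$ over $\mathbb{F}_2$, and for each $1 \le i \le n$ let $f_i \in \mathbb{F}_{2^n}[x]$ be a polynomial such that $f_i(x)$ equals the $i$-th coordinate of $x$ in the basis (as the field element $0$ or $1$) for all $x \in \mathbb{F}_{2^n}$. Let a 3-CNF over $n$ Boolean variables be given as a list of $m \le n$ clauses, where each clause $k$ consists of three pairs $(i_{k,1}, \varepsilon_{k,1}), (i_{k,2}, \varepsilon_{k,2}), (i_{k,3}, \varepsilon_{k,3})$ with $i_{k,j} \in \{1,\ldots,n\}$ a variable index and $\varepsilon_{k,j} \in \mathbb{F}_2$ a sign; an assignment $b : \{1,\ldots,n\} \to \mathbb{F}_2$ satisfies clause $k$ iff $b(i_{k,j}) \ne \varepsilon_{k,j}$ for some $j \in \{1,2,3\}$. For each clause $k$ define the polynomial $P_k = \prod_{j=1}^{3} (f_{i_{k,j}} + \varepsilon_{k,j})$ (where $\varepsilon_{k,j}$ is interpreted as the constant $0$ or $1$ in $\mathbb{F}_{2^n}$), and define $Q = \sum_{k=1}^{m} \omega_k \cdot P_k$.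 Then the number of roots of $Q$ in $\mathbb{F}_{2^n}$ equals the number of assignments $b : \{1,\ldots,n\} \to \mathbb{F}_2$ satisfying all $m$ clauses. -/

import Mathlib

/-! The coordinate polynomials turn `Q(x)` into `∑ₖ cₖ(x) ωₖ`, where
`cₖ(x) = ∏ⱼ (x_{i_{k,j}} + ε_{k,j}) ∈ 𝔽₂` vanishes exactly when some `x_{i_{k,j}} = ε_{k,j}`.
Since `m ≤ n`, the `ωₖ` are linearly independent, so `Q(x) = 0` iff every clause has such a
literal. Flipping all coordinates, `b = x + 1`, turns this into "every clause is satisfied". -/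

open Polynomial

theorem ZMod.two_eq_iff_add_one_ne (a c : ZMod 2) : a = c ↔ a + 1 ≠ c := by
  revert a c
  decide

theorem LinearIndependent.sum_prod_smul_eq_zero_iff {R M ι J : Type*} [CommRing R]
    [NoZeroDivisors R] [Nontrivial R] [AddCommGroup M] [Module R M] [Fintype ι] [Fintype J]
    {v : ι → M} (hv : LinearIndependent R v) (a : ι → J → R) :
    ∑ i, (∏ j, a i j) • v i = 0 ↔ ∀ i, ∃ j, a i j = 0 := by
  refine ⟨fun h i => ?_, fun h => Finset.sum_eq_zero fun i _ => ?_⟩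
  · simpa [Finset.prod_eq_zero_iff] using Fintype.linearIndependent_iff.mp hv _ h i
  · obtain ⟨j, hj⟩ := h i
    rw [Finset.prod_eq_zero (Finset.mem_univ j) hj, zero_smul]

section Coordinates

variable {ι L : Type*} [CommRing L] [Algebra (ZMod 2) L] (ω : Module.Basis ι (ZMod 2) L)

theorem eval_eq_algebraMap_repr {g : L[X]} {x : L} {i : ι}
    (hg : (ω.repr x i = 0 → g.eval x = 0) ∧ (ω.repr x i = 1 → g.eval x = 1)) :
    g.eval x = algebraMap (ZMod 2) L (ω.repr x i) := by
  obtain h | h : ω.repr x i = 0 ∨ ω.repr x i = 1 := by generalize ω.repr x i = a; revert a; decide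
  · rw [h, hg.1 h, map_zero]
  · rw [h, hg.2 h, map_one]

theorem eval_prod_add_C_eq_algebraMap {J : Type*} [Fintype J] {f : ι → L[X]}
    (hf : ∀ i x, (f i).eval x = algebraMap (ZMod 2) L (ω.repr x i))
    (idx : J → ι) (sign : J → ZMod 2) (x : L) :
    (∏ j, (f (idx j) + C (algebraMap (ZMod 2) L (sign j)))).eval x
      = algebraMap (ZMod 2) L (∏ j, (ω.repr x (idx j) + sign j)) := by
  simp only [eval_prod, eval_add, eval_C, hf, map_prod, map_add]

end Coordinates

theorem card_falsifying_eq_card_satisfying {ι K J : Type*} [Fintype ι] [Fintype K] [Fintype J]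
    (idx : K → J → ι) (sign : K → J → ZMod 2) :
    Nat.card {b : ι → ZMod 2 // ∀ k, ∃ j, b (idx k j) = sign k j}
      = Nat.card {b : ι → ZMod 2 // ∀ k, ∃ j, b (idx k j) ≠ sign k j} :=
  Nat.card_congr <| (Equiv.addRight 1).subtypeEquiv fun b => by
    simp only [Equiv.coe_addRight, Pi.add_apply, Pi.one_apply, ZMod.two_eq_iff_add_one_ne]

theorem card_roots_eq_card_satisfying_assignments_general (n m : ℕ) (hm : m ≤ n)
    (ω : Module.Basis (Fin n) (ZMod 2) (GaloisField 2 n))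
    (f : Fin n → Polynomial (GaloisField 2 n))
    (hf : ∀ (i : Fin n) (x : GaloisField 2 n),
      (ω.repr x i = 0 → Polynomial.eval x (f i) = 0) ∧
      (ω.repr x i = 1 → Polynomial.eval x (f i) = 1))
    (idx : Fin m → Fin 3 → Fin n)
    (sign : Fin m → Fin 3 → ZMod 2)
    (P : Fin m → Polynomial (GaloisField 2 n))
    (hP : ∀ k : Fin m, P k = ∏ j : Fin 3,
      (f (idx k j) + Polynomial.C (algebraMap (ZMod 2) (GaloisField 2 n) (sign k j))))
    (Q : Polynomial (GaloisField 2 n))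
    (hQ : Q = ∑ k : Fin m, Polynomial.C (ω (Fin.castLE hm k)) * P k) :
    Nat.card {x : GaloisField 2 n // Polynomial.eval x Q = 0}
      = Nat.card {b : Fin n → ZMod 2 // ∀ k : Fin m, ∃ j : Fin 3, b (idx k j) ≠ sign k j} := by
  have hf' i x := eval_eq_algebraMap_repr ω (hf i x)
  have hQ_eval x : Q.eval x
      = ∑ k, (∏ j, (ω.repr x (idx k j) + sign k j)) • ω (Fin.castLE hm k) := by
    simp only [hQ, hP, eval_finsetSum, eval_mul, eval_C,
      eval_prod_add_C_eq_algebraMap ω hf', Algebra.smul_def, mul_comm]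
  have hroot x : Q.eval x = 0 ↔ ∀ k, ∃ j, ω.repr x (idx k j) = sign k j := by
    have hω : LinearIndependent (ZMod 2) fun k => ω (Fin.castLE hm k) :=
      ω.linearIndependent.comp _ (Fin.castLE_injective hm)
    rw [hQ_eval, hω.sum_prod_smul_eq_zero_iff]
    simp only [CharTwo.add_eq_zero]
  rw [← card_falsifying_eq_card_satisfying]
  exact Nat.card_congr <| ω.equivFun.toEquiv.subtypeEquiv hroot

/-- Reduction of #3SAT to counting roots of a single polynomial over `𝔽_{2^n}`.
Given a basis `ω` of `𝔽_{2^n}` over `𝔽_2`, coordinate polynomials `f i`, and a 3-CNF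
with `m ≤ n` clauses described by variable indices `idx k j` and signs `sign k j`,
the polynomial `Q = ∑ k, ω k * ∏ j, (f (idx k j) + sign k j)` has exactly as many
roots in `𝔽_{2^n}` as the 3-CNF has satisfying assignments. -/
theorem card_roots_eq_card_satisfying_assignments (n m : ℕ) (hn : 1 ≤ n) (hm : m ≤ n)
    (ω : Module.Basis (Fin n) (ZMod 2) (GaloisField 2 n))
    (f : Fin n → Polynomial (GaloisField 2 n))
    (hf : ∀ (i : Fin n) (x : GaloisField 2 n),
      (ω.repr x i = 0 → Polynomial.eval x (f i) = 0) ∧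
      (ω.repr x i = 1 → Polynomial.eval x (f i) = 1))
    (idx : Fin m → Fin 3 → Fin n)
    (sign : Fin m → Fin 3 → ZMod 2)
    (P : Fin m → Polynomial (GaloisField 2 n))
    (hP : ∀ k : Fin m, P k = ∏ j : Fin 3,
      (f (idx k j) + Polynomial.C (algebraMap (ZMod 2) (GaloisField 2 n) (sign k j))))
    (Q : Polynomial (GaloisField 2 n))
    (hQ : Q = ∑ k : Fin m, Polynomial.C (ω (Fin.castLE hm k)) * P k) :
    Nat.card {x : GaloisField 2 n // Polynomial.eval x Q = 0}
      = Nat.card {b : Fin n → ZMod 2 // ∀ k : Fin m, ∃ j : Fin 3, b (idx k j) ≠ sign k j} :=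
  card_roots_eq_card_satisfying_assignments_general n m hm ω f hf idx sign P hP Q hQ
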